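/- Let Λ be the Lobachevsky function. Then 2·Λ(π/6) = 3·Λ(π/3). -/

import Mathlib

/-!
Integrating the product formula `2 sin 2u = (2 sin u) (2 sin (π/2 - u))` over `[0, θ]` gives the
duplication formula `Λ(2θ) = 2Λ(θ) + 2Λ(π/2) - 2Λ(π/2 - θ)`. At `θ = π/4` it forces `Λ(π/2) = 0`,
and at `θ = π/6` it reads `Λ(π/3) = 2Λ(π/6) - 2Λ(π/3)`.
-/

open Real

/-- The Lobachevsky function `Λ(θ) = −∫₀^θ log|2 sin t| dt`. -/
noncomputable def lobachevsky (θ : ℝ) : ℝ :=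
  -∫ t in (0:ℝ)..θ, Real.log |2 * Real.sin t|

open Filter MeasureTheory intervalIntegral

theorem intervalIntegrable_log_abs_two_mul_sin (a b : ℝ) :
    IntervalIntegrable (fun t ↦ log |2 * sin t|) volume a b :=
  ((analyticOnNhd_const.mul analyticOnNhd_sin).meromorphicOn).intervalIntegrable_log_norm

-- Not everywhere: at a zero of `sin`, `log 0 = 0` leaves `log |2 * cos u|` unmatched.
theorem log_abs_two_mul_sin_two_mul :
    ∀ᶠ u in codiscrete ℝ, log |2 * sin (2 * u)| = log |2 * sin u| + log |2 * cos u| := by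
  have hsin : sin ⁻¹' {0}ᶜ ∈ codiscrete ℝ :=
    analyticOnNhd_sin.preimage_zero_mem_codiscrete (x := π / 2) (by simp)
  have hcos : cos ⁻¹' {0}ᶜ ∈ codiscrete ℝ :=
    analyticOnNhd_cos.preimage_zero_mem_codiscrete (x := 0) (by simp)
  filter_upwards [hsin, hcos] with u hsu hcu
  simp only [Set.mem_preimage, Set.mem_compl_iff, Set.mem_singleton_iff] at hsu hcu
  rw [← log_mul (by positivity) (by positivity), ← abs_mul, sin_two_mul]
  ring_nf

theorem integral_log_abs_two_mul_cos (θ : ℝ) :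
    ∫ u in (0:ℝ)..θ, log |2 * cos u| = lobachevsky (π / 2 - θ) - lobachevsky (π / 2) := by
  simp only [← sin_pi_div_two_sub]
  rw [integral_comp_sub_left (fun t ↦ log |2 * sin t|), sub_zero, lobachevsky, lobachevsky,
    ← integral_interval_sub_left (intervalIntegrable_log_abs_two_mul_sin 0 _)
      (intervalIntegrable_log_abs_two_mul_sin 0 _)]
  ring

theorem lobachevsky_two_mul_add_lobachevsky_pi_div_two (θ : ℝ) :
    lobachevsky (2 * θ) = 2 * lobachevsky θ + 2 * lobachevsky (π / 2)
      - 2 * lobachevsky (π / 2 - θ) := by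
  have hcos : IntervalIntegrable (fun u ↦ log |2 * cos u|) volume 0 θ := by
    simpa only [sin_pi_div_two_sub, sub_self, sub_sub_cancel] using
      (intervalIntegrable_log_abs_two_mul_sin (π / 2) (π / 2 - θ)).comp_sub_left (π / 2)
  have hsplit : ∫ u in (0:ℝ)..θ, log |2 * sin (2 * u)|
      = ∫ u in (0:ℝ)..θ, (log |2 * sin u| + log |2 * cos u|) :=
    integral_congr_codiscreteWithin
      (log_abs_two_mul_sin_two_mul.filter_mono (codiscreteWithin_mono (Set.subset_univ _)))
  calc lobachevsky (2 * θ)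
      = -(2 * ∫ u in (0:ℝ)..θ, log |2 * sin (2 * u)|) := by
        rw [lobachevsky, integral_comp_mul_left (fun t ↦ log |2 * sin t|) two_ne_zero]
        simp
    _ = _ := by
        rw [hsplit, integral_add (intervalIntegrable_log_abs_two_mul_sin _ _) hcos,
          integral_log_abs_two_mul_cos]
        unfold lobachevsky
        ring

theorem lobachevsky_pi_div_two : lobachevsky (π / 2) = 0 := by
  have h := lobachevsky_two_mul_add_lobachevsky_pi_div_two (π / 4)
  rw [show 2 * (π / 4) = π / 2 by ring, show π / 2 - π / 4 = π / 4 by ring] at h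
  linarith

theorem lobachevsky_two_mul (θ : ℝ) :
    lobachevsky (2 * θ) = 2 * lobachevsky θ - 2 * lobachevsky (π / 2 - θ) := by
  rw [lobachevsky_two_mul_add_lobachevsky_pi_div_two, lobachevsky_pi_div_two]
  ring

/-- The two expressions for the volume of the regular ideal hyperbolic
tetrahedron agree: `v_tet = 2Λ(π/6) = 3Λ(π/3)`. -/
theorem two_lambda_pi_six_eq_three_lambda_pi_three :
    2 * lobachevsky (π / 6) = 3 * lobachevsky (π / 3) := by
  have h := lobachevsky_two_mul (π / 6)
  rw [show 2 * (π / 6) = π / 3 by ring, show π / 2 - π / 6 = π / 3 by ring] at h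
  linarith
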